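/- arXiv:2008.09944 — 2 statements merged into one kernel-verified Lean document; each statement's English description precedes it below -/
import Mathlib

section
/- Let F be a finite field, let d be an even positive integer, and let n1, n2, a1, a2, b1, b2, s be positive integers with n1 + n2 = n, a1 + a2 = k, b1 + b2 ≥ d/2, and for i = 1,2: n_i ≥ k, a_i ≥ d/2 and 1 ≤ b_i ≤ d/2. Let M_{1,2} be a set of a1 × (n2 − a2) matrices over F with pairwise rank distance ≥ d/2, and M_{2,1} a set of a2 × (n1 − a1) matrices with pairwise rank distance ≥ d/2. For r = 1,…,s let M_{1,1}^r be a set of a1 × (n1 − a1) matrices with pairwise rank distance ≥ d/2 and M_{2,2}^r a set of a2 × (n2 − a2) matrices with pairwise rank distance ≥ d/2, such that for all r ≠ r', i ∈ {1,2}, M ∈ M_{i,i}^r and M' ∈ M_{i,i}^{r'}, one has M ≠ M' and rank(M − M') ≥ b_i. For r = 1,…,s let N_r be the set of row spaces of the k × n block matrices with row blocks of sizes a1, a2 and column blocks of sizes a1, n1−a1, a2, n2−a2 given by ( I_{a1}, M_{1,1}, 0, M_{1,2} ; 0, M_{2,1}, I_{a2}, M_{2,2} ), where M_{1,1} ∈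 M_{1,1}^r, M_{2,2} ∈ M_{2,2}^r, M_{1,2} ∈ M_{1,2}, M_{2,1} ∈ M_{2,1}. Then every element of N = ∪_{r=1}^s N_r is a k-dimensional subspace of F^n, and whenever W_1 ∈ N_r and W_2 ∈ N_{r'} arise from different generator matrices (in particular whenever W_1 ≠ W_2), dim(W_1 ∩ W_2) ≤ k − d/2; that is, N is an (n,*,d,k) constant dimension code. -/
/-!
Every generator matrix `G` carries an identity matrix on the pivot columns, so `R(G)` has
dimension `k`, and a vector `x ᵥ* G = y ᵥ* G'` in both row spaces forces `x = y`, hence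
`x ∈ ker (G - G')`. Thus `dim (R(G) ∩ R(G')) ≤ k - rank (G - G')`. The rank of `G - G'` is at
least that of any differing block, and when only the diagonal blocks differ it is at least
`rank (M11 - M11') + rank (M22 - M22') ≥ b1 + b2 ≥ d / 2`.
-/

open Matrix

/-- The row space of a matrix: the span of its rows, i.e. the range of `vecMul`. -/
noncomputable def rowSpace {F : Type*} [Field F] {m n : Type*} [Fintype m]
    (A : Matrix m n F) : Submodule F (n → F) :=
  LinearMap.range A.vecMulLinear

/-- The generator matrix `( I_{a1}, M11, 0, M12 ; 0, M21, I_{a2}, M22 )` with row blocks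
of sizes `a1, a2` and column blocks of sizes `a1, p1, a2, p2`. -/
def gen6 {F : Type*} [Field F] {a1 a2 p1 p2 : ℕ}
    (M11 : Matrix (Fin a1) (Fin p1) F) (M12 : Matrix (Fin a1) (Fin p2) F)
    (M21 : Matrix (Fin a2) (Fin p1) F) (M22 : Matrix (Fin a2) (Fin p2) F) :
    Matrix (Fin a1 ⊕ Fin a2) ((Fin a1 ⊕ Fin p1) ⊕ (Fin a2 ⊕ Fin p2)) F :=
  Matrix.fromBlocks (Matrix.fromCols 1 M11) (Matrix.fromCols 0 M12)
    (Matrix.fromCols 0 M21) (Matrix.fromCols 1 M22)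

open Module

theorem rank_le_rank_of_submatrix_eq {R : Type*} [CommSemiring R] [StrongRankCondition R]
    {m n m' n' : Type*} [Fintype n] [Fintype n'] {A : Matrix m n R} {B : Matrix m' n' R}
    {r : m' → m} {c : n' → n}
    (h : A.submatrix r c = B) : B.rank ≤ A.rank :=
  h ▸ rank_submatrix_le A r c

section RowSpace

variable {F : Type*} [Field F] {m n : Type*} [Fintype m]

theorem vecMul_comp_eq_self_of_submatrix_eq_one [DecidableEq m] {G : Matrix m n F} {c : m → n}
    (hG : G.submatrix id c = 1) (x : m → F) : (x ᵥ* G) ∘ c = x := by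
  change x ᵥ* G.submatrix id c = x
  rw [hG, vecMul_one]

theorem rowSpace_inf_le_map_ker_vecMulLinear_sub [DecidableEq m] {G G' : Matrix m n F}
    {c : m → n} (hG : G.submatrix id c = 1) (hG' : G'.submatrix id c = 1) :
    rowSpace G ⊓ rowSpace G' ≤ (LinearMap.ker (G - G').vecMulLinear).map G.vecMulLinear := by
  rintro _ ⟨⟨x, rfl⟩, ⟨y, hy⟩⟩
  simp only [vecMulLinear_apply] at hy
  have hyx : y = x := by
    rw [← vecMul_comp_eq_self_of_submatrix_eq_one hG' y, hy,
      vecMul_comp_eq_self_of_submatrix_eq_one hG x]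
  refine ⟨x, LinearMap.mem_ker.2 ?_, rfl⟩
  rw [vecMulLinear_apply, vecMul_sub, ← hy, hyx, sub_self]

variable [Fintype n]

theorem finrank_rowSpace (A : Matrix m n F) : finrank F (rowSpace A) = A.rank := by
  rw [rowSpace, range_vecMulLinear, rank_eq_finrank_span_row]

theorem finrank_ker_vecMulLinear_add_rank (A : Matrix m n F) :
    finrank F (LinearMap.ker A.vecMulLinear) + A.rank = Fintype.card m := by
  rw [← finrank_rowSpace, rowSpace, add_comm, LinearMap.finrank_range_add_finrank_ker,
    finrank_fintype_fun_eq_card]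

theorem finrank_rowSpace_of_submatrix_eq_one [DecidableEq m] {G : Matrix m n F} {c : m → n}
    (hG : G.submatrix id c = 1) : finrank F (rowSpace G) = Fintype.card m := by
  rw [finrank_rowSpace]
  refine (rank_le_card_height G).antisymm ?_
  calc Fintype.card m = (1 : Matrix m m F).rank := rank_one.symm
    _ ≤ G.rank := rank_le_rank_of_submatrix_eq hG

theorem finrank_rowSpace_inf_add_rank_sub_le [DecidableEq m] {G G' : Matrix m n F}
    {c : m → n} (hG : G.submatrix id c = 1) (hG' : G'.submatrix id c = 1) :
    finrank F ↥(rowSpace G ⊓ rowSpace G') + (G - G').rank ≤ Fintype.card m := by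
  calc finrank F ↥(rowSpace G ⊓ rowSpace G') + (G - G').rank
      ≤ finrank F (LinearMap.ker (G - G').vecMulLinear) + (G - G').rank := by
        gcongr
        exact (Submodule.finrank_mono (rowSpace_inf_le_map_ker_vecMulLinear_sub hG hG')).trans
          (Submodule.finrank_map_le _ _)
    _ = Fintype.card m := finrank_ker_vecMulLinear_add_rank _

end RowSpace

theorem rank_add_rank_le_rank_fromBlocks {F : Type*} [Field F] {m₁ m₂ n₁ n₂ : Type*}
    [Fintype m₁] [Fintype m₂] [Fintype n₁] [Fintype n₂]
    (A : Matrix m₁ n₁ F) (D : Matrix m₂ n₂ F) :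
    A.rank + D.rank ≤ (fromBlocks A 0 0 D).rank := by
  have hA := finrank_ker_vecMulLinear_add_rank A
  have hD := finrank_ker_vecMulLinear_add_rank D
  have hAD := finrank_ker_vecMulLinear_add_rank (fromBlocks A 0 0 D)
  rw [Fintype.card_sum] at hAD
  set K := LinearMap.ker (fromBlocks A 0 0 D).vecMulLinear
  have hmem (x : K) : x.1 ∘ Sum.inl ∈ LinearMap.ker A.vecMulLinear ∧
      x.1 ∘ Sum.inr ∈ LinearMap.ker D.vecMulLinear := by
    have hx : x.1 ᵥ* fromBlocks A 0 0 D = 0 := x.2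
    refine ⟨funext fun j => ?_, funext fun j => ?_⟩
    · simpa [vecMul_fromBlocks] using congr_fun hx (Sum.inl j)
    · simpa [vecMul_fromBlocks] using congr_fun hx (Sum.inr j)
  let φ : K →ₗ[F] LinearMap.ker A.vecMulLinear × LinearMap.ker D.vecMulLinear :=
    (LinearMap.codRestrict _ (LinearMap.funLeft F F Sum.inl ∘ₗ K.subtype) fun x => (hmem x).1).prod
      (LinearMap.codRestrict _ (LinearMap.funLeft F F Sum.inr ∘ₗ K.subtype) fun x => (hmem x).2)
  have hφ : Function.Injective φ := fun x y hxy => Subtype.ext <| funext fun i => by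
    cases i with
    | inl i => exact congr_fun (congr_arg (fun p => p.1.1) hxy) i
    | inr i => exact congr_fun (congr_arg (fun p => p.2.1) hxy) i
  have hK := LinearMap.finrank_le_finrank_of_injective hφ
  rw [finrank_prod] at hK
  omega

section Gen6

variable {F : Type*} [Field F] {a1 a2 p1 p2 : ℕ}
  (M11 M11' : Matrix (Fin a1) (Fin p1) F) (M12 M12' : Matrix (Fin a1) (Fin p2) F)
  (M21 M21' : Matrix (Fin a2) (Fin p1) F) (M22 M22' : Matrix (Fin a2) (Fin p2) F)

theorem gen6_submatrix_pivots :
    (gen6 M11 M12 M21 M22).submatrix id (Sum.map Sum.inl Sum.inl) = 1 := by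
  ext (i | i) (j | j) <;> simp [gen6, one_apply]

theorem rank_sub_le_rank_gen6_sub :
    let Δ := gen6 M11 M12 M21 M22 - gen6 M11' M12' M21' M22'
    (M11 - M11').rank ≤ Δ.rank ∧ (M12 - M12').rank ≤ Δ.rank ∧
      (M21 - M21').rank ≤ Δ.rank ∧ (M22 - M22').rank ≤ Δ.rank :=
  ⟨rank_le_rank_of_submatrix_eq (r := Sum.inl) (c := Sum.inl ∘ Sum.inr) (by ext; simp [gen6]),
   rank_le_rank_of_submatrix_eq (r := Sum.inl) (c := Sum.inr ∘ Sum.inr) (by ext; simp [gen6]),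
   rank_le_rank_of_submatrix_eq (r := Sum.inr) (c := Sum.inl ∘ Sum.inr) (by ext; simp [gen6]),
   rank_le_rank_of_submatrix_eq (r := Sum.inr) (c := Sum.inr ∘ Sum.inr) (by ext; simp [gen6])⟩

theorem rank_add_rank_le_rank_gen6_sub :
    (M11 - M11').rank + (M22 - M22').rank ≤
      (gen6 M11 M12 M21 M22 - gen6 M11' M12 M21 M22').rank :=
  (rank_add_rank_le_rank_fromBlocks _ _).trans <| rank_le_rank_of_submatrix_eq
    (r := id) (c := Sum.map Sum.inr Sum.inr) (by ext (i | i) (j | j) <;> simp [gen6])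

end Gen6

theorem two_blocks_construction_general
    (F : Type*) [Field F] (d n1 n2 a1 a2 b1 b2 k s : ℕ)
    (hk : a1 + a2 = k) (hb : d / 2 ≤ b1 + b2)
    (𝓜12 : Set (Matrix (Fin a1) (Fin (n2 - a2)) F))
    (𝓜21 : Set (Matrix (Fin a2) (Fin (n1 - a1)) F))
    (𝓜11 : Fin s → Set (Matrix (Fin a1) (Fin (n1 - a1)) F))
    (𝓜22 : Fin s → Set (Matrix (Fin a2) (Fin (n2 - a2)) F))
    (h12 : ∀ M ∈ 𝓜12, ∀ M' ∈ 𝓜12, M ≠ M' → d / 2 ≤ (M - M').rank)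
    (h21 : ∀ M ∈ 𝓜21, ∀ M' ∈ 𝓜21, M ≠ M' → d / 2 ≤ (M - M').rank)
    (h11 : ∀ r, ∀ M ∈ 𝓜11 r, ∀ M' ∈ 𝓜11 r, M ≠ M' → d / 2 ≤ (M - M').rank)
    (h22 : ∀ r, ∀ M ∈ 𝓜22 r, ∀ M' ∈ 𝓜22 r, M ≠ M' → d / 2 ≤ (M - M').rank)
    (h11cross : ∀ r r', r ≠ r' → ∀ M ∈ 𝓜11 r, ∀ M' ∈ 𝓜11 r',
      M ≠ M' ∧ b1 ≤ (M - M').rank)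
    (h22cross : ∀ r r', r ≠ r' → ∀ M ∈ 𝓜22 r, ∀ M' ∈ 𝓜22 r',
      M ≠ M' ∧ b2 ≤ (M - M').rank) :
    (∀ r, ∀ M11 ∈ 𝓜11 r, ∀ M22 ∈ 𝓜22 r, ∀ M12 ∈ 𝓜12, ∀ M21 ∈ 𝓜21,
      Module.finrank F ↥(rowSpace (gen6 M11 M12 M21 M22)) = k) ∧
    (∀ r r', ∀ M11 ∈ 𝓜11 r, ∀ M22 ∈ 𝓜22 r, ∀ M12 ∈ 𝓜12, ∀ M21 ∈ 𝓜21,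
      ∀ M11' ∈ 𝓜11 r', ∀ M22' ∈ 𝓜22 r', ∀ M12' ∈ 𝓜12, ∀ M21' ∈ 𝓜21,
      gen6 M11 M12 M21 M22 ≠ gen6 M11' M12' M21' M22' →
        Module.finrank F
          ↥(rowSpace (gen6 M11 M12 M21 M22) ⊓ rowSpace (gen6 M11' M12' M21' M22')) ≤
          k - d / 2) := by
  refine ⟨fun r M11 _ M22 _ M12 _ M21 _ => ?_, fun r r' M11 hM11 M22 hM22 M12 hM12 M21 hM21
    M11' hM11' M22' hM22' M12' hM12' M21' hM21' hne => ?_⟩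
  · simpa [← hk] using finrank_rowSpace_of_submatrix_eq_one (gen6_submatrix_pivots M11 M12 M21 M22)
  suffices hrank : d / 2 ≤ (gen6 M11 M12 M21 M22 - gen6 M11' M12' M21' M22').rank by
    have := finrank_rowSpace_inf_add_rank_sub_le (gen6_submatrix_pivots M11 M12 M21 M22)
      (gen6_submatrix_pivots M11' M12' M21' M22')
    simp only [Fintype.card_sum, Fintype.card_fin] at this
    omega
  obtain ⟨h11le, h12le, h21le, h22le⟩ :=
    rank_sub_le_rank_gen6_sub M11 M11' M12 M12' M21 M21' M22 M22'
  by_cases e12 : M12 = M12'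
  swap; · exact (h12 M12 hM12 M12' hM12' e12).trans h12le
  by_cases e21 : M21 = M21'
  swap; · exact (h21 M21 hM21 M21' hM21' e21).trans h21le
  subst e12 e21
  by_cases err : r = r'
  · subst err
    by_cases e11 : M11 = M11'
    · subst e11
      exact (h22 r M22 hM22 M22' hM22' fun e22 => hne (e22 ▸ rfl)).trans h22le
    · exact (h11 r M11 hM11 M11' hM11' e11).trans h11le
  calc d / 2 ≤ b1 + b2 := hb
    _ ≤ (M11 - M11').rank + (M22 - M22').rank :=
        add_le_add (h11cross r r' err M11 hM11 M11' hM11').2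
          (h22cross r r' err M22 hM22 M22' hM22').2
    _ ≤ _ := rank_add_rank_le_rank_gen6_sub M11 M11' M12 M21 M22 M22'

/-- the two-blocks construction (Proposition 2.5): row spaces of the block
generator matrices built from rank metric codes with the stated rank-distance
restrictions form an `(n,*,d,k)` constant dimension code. -/
theorem two_blocks_construction
    (F : Type*) [Field F] [Fintype F] (d n n1 n2 a1 a2 b1 b2 k s : ℕ)
    (hd : 0 < d) (hd2 : 2 ∣ d) (hs : 0 < s)
    (hn : n1 + n2 = n) (hk : a1 + a2 = k) (hb : d / 2 ≤ b1 + b2)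
    (hn1 : k ≤ n1) (hn2 : k ≤ n2)
    (ha1 : d / 2 ≤ a1) (ha2 : d / 2 ≤ a2)
    (hb1 : 1 ≤ b1) (hb1' : b1 ≤ d / 2) (hb2 : 1 ≤ b2) (hb2' : b2 ≤ d / 2)
    (𝓜12 : Set (Matrix (Fin a1) (Fin (n2 - a2)) F))
    (𝓜21 : Set (Matrix (Fin a2) (Fin (n1 - a1)) F))
    (𝓜11 : Fin s → Set (Matrix (Fin a1) (Fin (n1 - a1)) F))
    (𝓜22 : Fin s → Set (Matrix (Fin a2) (Fin (n2 - a2)) F))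
    (h12 : ∀ M ∈ 𝓜12, ∀ M' ∈ 𝓜12, M ≠ M' → d / 2 ≤ (M - M').rank)
    (h21 : ∀ M ∈ 𝓜21, ∀ M' ∈ 𝓜21, M ≠ M' → d / 2 ≤ (M - M').rank)
    (h11 : ∀ r, ∀ M ∈ 𝓜11 r, ∀ M' ∈ 𝓜11 r, M ≠ M' → d / 2 ≤ (M - M').rank)
    (h22 : ∀ r, ∀ M ∈ 𝓜22 r, ∀ M' ∈ 𝓜22 r, M ≠ M' → d / 2 ≤ (M - M').rank)
    (h11cross : ∀ r r', r ≠ r' → ∀ M ∈ 𝓜11 r, ∀ M' ∈ 𝓜11 r',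
      M ≠ M' ∧ b1 ≤ (M - M').rank)
    (h22cross : ∀ r r', r ≠ r' → ∀ M ∈ 𝓜22 r, ∀ M' ∈ 𝓜22 r',
      M ≠ M' ∧ b2 ≤ (M - M').rank) :
    (∀ r, ∀ M11 ∈ 𝓜11 r, ∀ M22 ∈ 𝓜22 r, ∀ M12 ∈ 𝓜12, ∀ M21 ∈ 𝓜21,
      Module.finrank F ↥(rowSpace (gen6 M11 M12 M21 M22)) = k) ∧
    (∀ r r', ∀ M11 ∈ 𝓜11 r, ∀ M22 ∈ 𝓜22 r, ∀ M12 ∈ 𝓜12, ∀ M21 ∈ 𝓜21,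
      ∀ M11' ∈ 𝓜11 r', ∀ M22' ∈ 𝓜22 r', ∀ M12' ∈ 𝓜12, ∀ M21' ∈ 𝓜21,
      gen6 M11 M12 M21 M22 ≠ gen6 M11' M12' M21' M22' →
        Module.finrank F
          ↥(rowSpace (gen6 M11 M12 M21 M22) ⊓ rowSpace (gen6 M11' M12' M21' M22')) ≤
          k - d / 2) :=
  two_blocks_construction_general F d n1 n2 a1 a2 b1 b2 k s hk hb 𝓜12 𝓜21 𝓜11 𝓜22 h12 h21 h11 h22
    h11cross h22cross
end

section
/- Let F be a finite field and u1, u2, p, m, c1, c2, d_f, s positive integers with c1 + c2 ≥ d_f. For j = 1,…,s let M_{1,j} be a set of u1 × p matrices over F with pairwise rank distance ≥ d_f and M_{2,j} a set of u2 × m matrices with pairwise rank distance ≥ d_f, such that for all j ≠ j', i ∈ {1,2}, M ∈ M_{i,j} and M' ∈ M_{i,j'}, one has M ≠ M' and rank(M − M') ≥ c_i. Let M_3 be a set of u1 × m matrices with pairwise rank distance ≥ d_f. For j = 1,…,s let M_j be the set of (u1+u2) × (p+m) block matrices ( M_1, M_3 ; 0, M_2 ) with M_1 ∈ M_{1,j},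 M_2 ∈ M_{2,j}, M_3 ∈ M_3. Then M = ∪_{j=1}^s M_j has minimum rank distance ≥ d_f, i.e. rank(X − Y) ≥ d_f for all distinct X, Y ∈ M, and |M| = Σ_{j=1}^s |M_{1,j}|·|M_{2,j}|·|M_3|. -/
/-!
Two matrices of `⋃ⱼ 𝓜ⱼ` differ by a block upper triangular matrix `( A, B ; 0, D )`, whose rank
is at least `rank A + rank D` (its first block of columns spans a space of dimension `rank A` in
the kernel of the projection onto the last rows, while the projection of its column space has
dimension at least `rank D`) and at least `rank B`. For two matrices from different `𝓜ⱼ`, `𝓜ⱼ'`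
this gives `c₁ + c₂ ≥ d_f`; inside one `𝓜ⱼ` the first block that differs gives `d_f`. Since the
`𝓜₁ⱼ` are pairwise disjoint, so are the `𝓜ⱼ`, and each `𝓜ⱼ` is in bijection with
`𝓜₁ⱼ × 𝓜₂ⱼ × 𝓜₃`.
-/

theorem LinearMap.finrank_range_comp_add_finrank_le {K V W U : Type*} [DivisionRing K]
    [AddCommGroup V] [Module K V] [AddCommGroup W] [Module K W] [FiniteDimensional K W]
    [AddCommGroup U] [Module K U] (T : V →ₗ[K] W) (π : W →ₗ[K] U) {N : Submodule K W}
    (hNT : N ≤ range T) (hNπ : N ≤ ker π) :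
    Module.finrank K (range (π ∘ₗ T)) + Module.finrank K N ≤ Module.finrank K (range T) := by
  let f := π ∘ₗ (range T).subtype
  have hrange : range f = range (π ∘ₗ T) := by
    rw [range_comp, range_comp, Submodule.range_subtype]
  have hker : Submodule.comap (range T).subtype N ≤ ker f := by
    rw [ker_comp]
    exact Submodule.comap_mono hNπ
  rw [← f.finrank_range_add_finrank_ker, hrange,
    ← (Submodule.comapSubtypeEquivOfLe hNT).finrank_eq]
  exact Nat.add_le_add_left (Submodule.finrank_mono hker) _

namespace Matrix

variable {F : Type*} [Field F] {n₁ n₂ m₁ m₂ : Type*}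

theorem fromBlocks_sub {α : Type*} [Sub α] (A : Matrix n₁ m₁ α) (B : Matrix n₁ m₂ α)
    (C : Matrix n₂ m₁ α) (D : Matrix n₂ m₂ α) (A' : Matrix n₁ m₁ α) (B' : Matrix n₁ m₂ α)
    (C' : Matrix n₂ m₁ α) (D' : Matrix n₂ m₂ α) :
    fromBlocks A B C D - fromBlocks A' B' C' D' =
      fromBlocks (A - A') (B - B') (C - C') (D - D') := by
  ext (i | i) (j | j) <;> rfl

variable [Fintype m₁] [Fintype m₂]

theorem rank_le_rank_fromBlocks₁₂ (A : Matrix n₁ m₁ F) (B : Matrix n₁ m₂ F)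
    (C : Matrix n₂ m₁ F) (D : Matrix n₂ m₂ F) : B.rank ≤ (fromBlocks A B C D).rank := by
  have : (fromBlocks A B C D).submatrix Sum.inl Sum.inr = B := rfl
  exact this ▸ rank_submatrix_le _ Sum.inl Sum.inr

theorem rank_add_rank_le_rank_fromBlocks_zero₂₁ [Fintype n₁] [Fintype n₂]
    (A : Matrix n₁ m₁ F) (B : Matrix n₁ m₂ F) (D : Matrix n₂ m₂ F) :
    A.rank + D.rank ≤ (fromBlocks A B 0 D).rank := by
  set M := fromBlocks A B 0 D
  let π : (n₁ ⊕ n₂ → F) →ₗ[F] (n₂ → F) := LinearMap.funLeft F F Sum.inr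
  have hleft : LinearMap.range (M.submatrix id Sum.inl).mulVecLin ≤
      LinearMap.range M.mulVecLin := by
    rw [range_mulVecLin, range_mulVecLin]
    exact Submodule.span_mono (Set.range_comp_subset_range Sum.inl M.col)
  have hker : LinearMap.range (M.submatrix id Sum.inl).mulVecLin ≤ LinearMap.ker π := by
    rw [range_mulVecLin, Submodule.span_le]
    rintro _ ⟨j, rfl⟩
    exact LinearMap.mem_ker.2 (funext fun i => rfl)
  have hπM : π ∘ₗ M.mulVecLin = (M.submatrix Sum.inr id).mulVecLin :=
    LinearMap.ext fun x => rfl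
  have hA : A.rank ≤ (M.submatrix id Sum.inl).rank := by
    have : (M.submatrix id Sum.inl).submatrix Sum.inl id = A := rfl
    exact this ▸ rank_submatrix_le _ Sum.inl id
  have hD : D.rank ≤ (M.submatrix Sum.inr id).rank := by
    have : (M.submatrix Sum.inr id).submatrix id Sum.inr = D := rfl
    exact this ▸ rank_submatrix_le _ id Sum.inr
  calc A.rank + D.rank
      ≤ (M.submatrix Sum.inr id).rank + (M.submatrix id Sum.inl).rank := by omega
    _ ≤ M.rank := by
      have key := LinearMap.finrank_range_comp_add_finrank_le M.mulVecLin π hleft hker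
      rwa [hπM] at key

end Matrix

section BlockTriangularCode

open Matrix

variable {F : Type*} [Field F] {n₁ n₂ m₁ m₂ : Type*}

def blockTriangularCode (S₁ : Set (Matrix n₁ m₁ F)) (S₂ : Set (Matrix n₂ m₂ F))
    (S₃ : Set (Matrix n₁ m₂ F)) : Set (Matrix (n₁ ⊕ n₂) (m₁ ⊕ m₂) F) :=
  {X | ∃ M₁ ∈ S₁, ∃ M₂ ∈ S₂, ∃ M₃ ∈ S₃, X = fromBlocks M₁ M₃ 0 M₂}

variable {S₁ S₁' : Set (Matrix n₁ m₁ F)} {S₂ S₂' : Set (Matrix n₂ m₂ F)}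
  {S₃ S₃' : Set (Matrix n₁ m₂ F)}

theorem blockTriangularCode_eq_image :
    blockTriangularCode S₁ S₂ S₃ =
      (fun t => fromBlocks t.1 t.2.2 0 t.2.1) '' (S₁ ×ˢ S₂ ×ˢ S₃) := by
  ext X
  constructor
  · rintro ⟨M₁, h₁, M₂, h₂, M₃, h₃, rfl⟩
    exact ⟨(M₁, M₂, M₃), ⟨h₁, h₂, h₃⟩, rfl⟩
  · rintro ⟨⟨M₁, M₂, M₃⟩, ⟨h₁, h₂, h₃⟩, rfl⟩
    exact ⟨M₁, h₁, M₂, h₂, M₃, h₃, rfl⟩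

theorem ncard_blockTriangularCode :
    (blockTriangularCode S₁ S₂ S₃).ncard = S₁.ncard * S₂.ncard * S₃.ncard := by
  rw [blockTriangularCode_eq_image, Set.ncard_image_of_injective, Set.ncard_prod, Set.ncard_prod,
    mul_assoc]
  rintro ⟨A, D, B⟩ ⟨A', D', B'⟩ h
  simp_all

theorem disjoint_blockTriangularCode (h : Disjoint S₁ S₁') :
    Disjoint (blockTriangularCode S₁ S₂ S₃) (blockTriangularCode S₁' S₂' S₃') := by
  rw [Set.disjoint_left]
  rintro _ ⟨M₁, hM₁, M₂, -, M₃, -, rfl⟩ ⟨M₁', hM₁', M₂', -, M₃', -, h_eq⟩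
  exact Set.disjoint_left.1 h hM₁ ((fromBlocks_inj.1 h_eq).1 ▸ hM₁')

variable [Fintype n₁] [Fintype n₂] [Fintype m₁] [Fintype m₂]

theorem le_rank_sub_of_mem_blockTriangularCode {d c₁ c₂ : ℕ} (hc : d ≤ c₁ + c₂)
    (h₁ : ∀ A ∈ S₁, ∀ A' ∈ S₁', c₁ ≤ (A - A').rank)
    (h₂ : ∀ D ∈ S₂, ∀ D' ∈ S₂', c₂ ≤ (D - D').rank) {X Y : Matrix (n₁ ⊕ n₂) (m₁ ⊕ m₂) F}
    (hX : X ∈ blockTriangularCode S₁ S₂ S₃) (hY : Y ∈ blockTriangularCode S₁' S₂' S₃') :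
    d ≤ (X - Y).rank := by
  obtain ⟨A, hA, D, hD, B, -, rfl⟩ := hX
  obtain ⟨A', hA', D', hD', B', -, rfl⟩ := hY
  calc d ≤ (A - A').rank + (D - D').rank :=
        hc.trans (add_le_add (h₁ A hA A' hA') (h₂ D hD D' hD'))
    _ ≤ _ := by
      rw [fromBlocks_sub, sub_zero]
      exact rank_add_rank_le_rank_fromBlocks_zero₂₁ _ _ _

theorem pairwise_le_rank_sub_blockTriangularCode {d : ℕ}
    (h₁ : S₁.Pairwise fun A A' => d ≤ (A - A').rank)
    (h₂ : S₂.Pairwise fun D D' => d ≤ (D - D').rank)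
    (h₃ : S₃.Pairwise fun B B' => d ≤ (B - B').rank) :
    (blockTriangularCode S₁ S₂ S₃).Pairwise fun X Y => d ≤ (X - Y).rank := by
  rintro _ ⟨A, hA, D, hD, B, hB, rfl⟩ _ ⟨A', hA', D', hD', B', hB', rfl⟩ hne
  rw [fromBlocks_sub, sub_zero]
  by_cases hAA' : A = A'
  · by_cases hDD' : D = D'
    · have hBB' : B ≠ B' := by
        rintro rfl
        exact hne (hAA' ▸ hDD' ▸ rfl)
      exact (h₃ hB hB' hBB').trans (rank_le_rank_fromBlocks₁₂ _ _ _ _)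
    · exact (h₂ hD hD' hDD').trans
        (le_add_self.trans (rank_add_rank_le_rank_fromBlocks_zero₂₁ _ _ _))
  · exact (h₁ hA hA' hAA').trans
      (le_self_add.trans (rank_add_rank_le_rank_fromBlocks_zero₂₁ _ _ _))

end BlockTriangularCode

theorem fdrm_union_construction_general
    (F : Type*) [Field F] [Fintype F] (u1 u2 p m c1 c2 df s : ℕ)
    (hc : df ≤ c1 + c2)
    (𝓜1 : Fin s → Set (Matrix (Fin u1) (Fin p) F))
    (𝓜2 : Fin s → Set (Matrix (Fin u2) (Fin m) F))
    (h𝓜1 : ∀ j, ∀ M ∈ 𝓜1 j, ∀ M' ∈ 𝓜1 j, M ≠ M' → df ≤ (M - M').rank)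
    (h𝓜2 : ∀ j, ∀ M ∈ 𝓜2 j, ∀ M' ∈ 𝓜2 j, M ≠ M' → df ≤ (M - M').rank)
    (h𝓜1cross : ∀ j j', j ≠ j' → ∀ M ∈ 𝓜1 j, ∀ M' ∈ 𝓜1 j',
      M ≠ M' ∧ c1 ≤ (M - M').rank)
    (h𝓜2cross : ∀ j j', j ≠ j' → ∀ M ∈ 𝓜2 j, ∀ M' ∈ 𝓜2 j',
      M ≠ M' ∧ c2 ≤ (M - M').rank)
    (𝓜3 : Set (Matrix (Fin u1) (Fin m) F))
    (h𝓜3 : ∀ A ∈ 𝓜3, ∀ B ∈ 𝓜3, A ≠ B → df ≤ (A - B).rank) :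
    let 𝓜 : Set (Matrix (Fin u1 ⊕ Fin u2) (Fin p ⊕ Fin m) F) :=
      ⋃ j, {X | ∃ M1 ∈ 𝓜1 j, ∃ M2 ∈ 𝓜2 j, ∃ M3 ∈ 𝓜3,
        X = Matrix.fromBlocks M1 M3 0 M2}
    (∀ X ∈ 𝓜, ∀ Y ∈ 𝓜, X ≠ Y → df ≤ (X - Y).rank) ∧
    𝓜.ncard = ∑ j : Fin s, (𝓜1 j).ncard * (𝓜2 j).ncard * 𝓜3.ncard := by
  let code j := blockTriangularCode (𝓜1 j) (𝓜2 j) 𝓜3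
  change (∀ X ∈ ⋃ j, code j, ∀ Y ∈ ⋃ j, code j, X ≠ Y → df ≤ (X - Y).rank) ∧
    (⋃ j, code j).ncard = _
  have hdisj : Pairwise fun j j' => Disjoint (code j) (code j') := fun j j' hjj' =>
    disjoint_blockTriangularCode <| Set.disjoint_left.2 fun M hM hM' =>
      (h𝓜1cross j j' hjj' M hM M hM').1 rfl
  refine ⟨?_, ?_⟩
  · simp only [Set.mem_iUnion]
    rintro X ⟨j, hX⟩ Y ⟨j', hY⟩ hXY
    rcases eq_or_ne j j' with rfl | hjj'
    · exact pairwise_le_rank_sub_blockTriangularCode (fun _ hM _ hM' => h𝓜1 j _ hM _ hM')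
        (fun _ hM _ hM' => h𝓜2 j _ hM _ hM') (fun _ hM _ hM' => h𝓜3 _ hM _ hM') hX hY hXY
    · exact le_rank_sub_of_mem_blockTriangularCode hc
        (fun _ hM _ hM' => (h𝓜1cross j j' hjj' _ hM _ hM').2)
        (fun _ hM _ hM' => (h𝓜2cross j j' hjj' _ hM _ hM').2) hX hY
  · rw [Set.ncard_iUnion_of_finite (fun _ => Set.toFinite _) hdisj, finsum_eq_sum_of_fintype]
    exact Finset.sum_congr rfl fun j _ => ncard_blockTriangularCode

/-- Lemma 3.3: a union of blocks of rank metric codes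
`( M1, M3 ; 0, M2 )` with cross rank-distance restrictions `c1 + c2 ≥ d_f` has minimum
rank distance at least `d_f` and cardinality `Σ_j |M_{1,j}|·|M_{2,j}|·|M3|`. -/
theorem fdrm_union_construction
    (F : Type*) [Field F] [Fintype F] (u1 u2 p m c1 c2 df s : ℕ)
    (hu1 : 0 < u1) (hu2 : 0 < u2) (hp : 0 < p) (hm : 0 < m)
    (hc1 : 0 < c1) (hc2 : 0 < c2) (hdf : 0 < df) (hs : 0 < s)
    (hc : df ≤ c1 + c2)
    (𝓜1 : Fin s → Set (Matrix (Fin u1) (Fin p) F))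
    (𝓜2 : Fin s → Set (Matrix (Fin u2) (Fin m) F))
    (h𝓜1 : ∀ j, ∀ M ∈ 𝓜1 j, ∀ M' ∈ 𝓜1 j, M ≠ M' → df ≤ (M - M').rank)
    (h𝓜2 : ∀ j, ∀ M ∈ 𝓜2 j, ∀ M' ∈ 𝓜2 j, M ≠ M' → df ≤ (M - M').rank)
    (h𝓜1cross : ∀ j j', j ≠ j' → ∀ M ∈ 𝓜1 j, ∀ M' ∈ 𝓜1 j',
      M ≠ M' ∧ c1 ≤ (M - M').rank)
    (h𝓜2cross : ∀ j j', j ≠ j' → ∀ M ∈ 𝓜2 j, ∀ M' ∈ 𝓜2 j',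
      M ≠ M' ∧ c2 ≤ (M - M').rank)
    (𝓜3 : Set (Matrix (Fin u1) (Fin m) F))
    (h𝓜3 : ∀ A ∈ 𝓜3, ∀ B ∈ 𝓜3, A ≠ B → df ≤ (A - B).rank) :
    let 𝓜 : Set (Matrix (Fin u1 ⊕ Fin u2) (Fin p ⊕ Fin m) F) :=
      ⋃ j, {X | ∃ M1 ∈ 𝓜1 j, ∃ M2 ∈ 𝓜2 j, ∃ M3 ∈ 𝓜3,
        X = Matrix.fromBlocks M1 M3 0 M2}
    (∀ X ∈ 𝓜, ∀ Y ∈ 𝓜, X ≠ Y → df ≤ (X - Y).rank) ∧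
    𝓜.ncard = ∑ j : Fin s, (𝓜1 j).ncard * (𝓜2 j).ncard * 𝓜3.ncard :=
  fdrm_union_construction_general F u1 u2 p m c1 c2 df s hc 𝓜1 𝓜2 h𝓜1 h𝓜2 h𝓜1cross h𝓜2cross 𝓜3 h𝓜3
end
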